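/- arXiv:1008.4860 — 5 statements merged into one kernel-verified Lean document; each statement's English description precedes it below -/
import Mathlib

section
/- Let 0 < p < 1 and let ω : ℂ → ℂ be holomorphic on the unit disk with |ω(z)| ≤ 1 for all |z| < 1. If p ≤ (√5 - 1)/2, then |2ω(p) + p·ω'(p)| ≤ 2. -/
/-!
Schwarz–Pick at `p` gives `‖ω'(p)‖ (1 - p²) ≤ 1 - x²` with `x = ‖ω(p)‖ ≤ 1`, hence
`‖2ω(p) + pω'(p)‖ (1 - p²) ≤ 2x(1 - p²) + p(1 - x²)`. For `p² + p ≤ 1`, i.e.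
`p ≤ (√5 - 1)/2`, the right-hand side is at most `2(1 - p²)`, because the difference is
`(1 - x)(2(1 - p²) - p(1 + x)) ≥ (1 - x) · 2(1 - p² - p)`.
-/

open ComplexConjugate Metric Set Topology

noncomputable def diskMobius (a z : ℂ) : ℂ := (a - z) / (1 - conj a * z)

section diskMobius

variable {a w : ℂ}

@[simp] lemma diskMobius_zero (a : ℂ) : diskMobius a 0 = a := by simp [diskMobius]

@[simp] lemma diskMobius_self (a : ℂ) : diskMobius a a = 0 := by simp [diskMobius]

lemma one_sub_conj_mul_ne_zero (ha : ‖a‖ < 1) (hw : ‖w‖ ≤ 1) : 1 - conj a * w ≠ 0 := by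
  have : ‖conj a * w‖ < 1 := by
    rw [norm_mul, Complex.norm_conj]
    nlinarith [norm_nonneg a, norm_nonneg w]
  intro h
  rw [← sub_eq_zero.1 h, norm_one] at this
  exact this.false

lemma norm_one_sub_conj_mul_sq (a w : ℂ) :
    ‖1 - conj a * w‖ ^ 2 = ‖a - w‖ ^ 2 + (1 - ‖a‖ ^ 2) * (1 - ‖w‖ ^ 2) := by
  simp only [Complex.sq_norm, Complex.normSq_apply, Complex.sub_re, Complex.sub_im,
    Complex.one_re, Complex.one_im, Complex.mul_re, Complex.mul_im, Complex.conj_re,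
    Complex.conj_im]
  ring

lemma norm_diskMobius_le_one (ha : ‖a‖ < 1) (hw : ‖w‖ ≤ 1) : ‖diskMobius a w‖ ≤ 1 := by
  have hpos := norm_pos_iff.2 (one_sub_conj_mul_ne_zero ha hw)
  rw [diskMobius, norm_div, div_le_one hpos, ← sq_le_sq₀ (norm_nonneg _) hpos.le,
    norm_one_sub_conj_mul_sq]
  have : 0 ≤ (1 - ‖a‖ ^ 2) * (1 - ‖w‖ ^ 2) := by
    apply mul_nonneg <;> nlinarith [norm_nonneg a, norm_nonneg w]
  linarith

lemma norm_diskMobius_lt_one (ha : ‖a‖ < 1) (hw : ‖w‖ < 1) : ‖diskMobius a w‖ < 1 := by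
  have hpos := norm_pos_iff.2 (one_sub_conj_mul_ne_zero ha hw.le)
  rw [diskMobius, norm_div, div_lt_one hpos, ← sq_lt_sq₀ (norm_nonneg _) hpos.le,
    norm_one_sub_conj_mul_sq]
  have : 0 < (1 - ‖a‖ ^ 2) * (1 - ‖w‖ ^ 2) := by
    apply mul_pos <;> nlinarith [norm_nonneg a, norm_nonneg w]
  linarith

lemma hasDerivAt_diskMobius (hw : 1 - conj a * w ≠ 0) :
    HasDerivAt (diskMobius a) ((conj a * a - 1) / (1 - conj a * w) ^ 2) w := by
  have hnum : HasDerivAt (fun z => a - z) (-1) w := by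
    simpa using (hasDerivAt_id w).const_sub a
  have hden : HasDerivAt (fun z => 1 - conj a * z) (-conj a) w := by
    simpa using ((hasDerivAt_id w).const_mul (conj a)).const_sub 1
  exact (hnum.div hden hw).congr_deriv (by ring)

lemma hasDerivAt_diskMobius_zero (a : ℂ) : HasDerivAt (diskMobius a) (‖a‖ ^ 2 - 1 : ℂ) 0 := by
  simpa [Complex.conj_mul'] using hasDerivAt_diskMobius (a := a) (w := 0) (by simp)

lemma hasDerivAt_diskMobius_self (ha : ‖a‖ < 1) :
    HasDerivAt (diskMobius a) (-(1 - ‖a‖ ^ 2 : ℂ)⁻¹) a := by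
  have hne := one_sub_conj_mul_ne_zero ha ha.le
  convert hasDerivAt_diskMobius hne using 1
  rw [Complex.conj_mul'] at hne ⊢
  field_simp
  ring

lemma differentiableOn_diskMobius (ha : ‖a‖ < 1) :
    DifferentiableOn ℂ (diskMobius a) (closedBall 0 1) := fun _ hw =>
  (hasDerivAt_diskMobius (one_sub_conj_mul_ne_zero ha (mem_closedBall_zero_iff.1 hw))
    ).differentiableAt.differentiableWithinAt

lemma mapsTo_diskMobius_ball (ha : ‖a‖ < 1) :
    MapsTo (diskMobius a) (ball 0 1) (ball 0 1) := fun _ hw => by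
  rw [mem_ball_zero_iff] at hw ⊢
  exact norm_diskMobius_lt_one ha hw

lemma mapsTo_diskMobius_closedBall (ha : ‖a‖ < 1) :
    MapsTo (diskMobius a) (closedBall 0 1) (closedBall 0 1) := fun _ hw => by
  rw [mem_closedBall_zero_iff] at hw ⊢
  exact norm_diskMobius_le_one ha hw

end diskMobius

section SchwarzPick

variable {f : ℂ → ℂ} {z : ℂ}

lemma norm_deriv_mul_le_of_norm_lt_one (hf : DifferentiableOn ℂ f (ball 0 1))
    (hmaps : MapsTo f (ball 0 1) (closedBall 0 1)) (hz : ‖z‖ < 1) (hfz : ‖f z‖ < 1) :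
    ‖deriv f z‖ * (1 - ‖z‖ ^ 2) ≤ 1 - ‖f z‖ ^ 2 := by
  -- disk automorphisms move `z` and `f z` to `0`, where the Schwarz lemma applies
  set g := diskMobius (f z) ∘ f ∘ diskMobius z
  have hg : DifferentiableOn ℂ g (ball 0 1) :=
    (differentiableOn_diskMobius hfz).comp
      (hf.comp ((differentiableOn_diskMobius hz).mono ball_subset_closedBall)
        (mapsTo_diskMobius_ball hz))
      (hmaps.comp (mapsTo_diskMobius_ball hz))
  have hgmaps : MapsTo g (ball 0 1) (closedBall (g 0) 1) := by
    simpa [g] using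
      (mapsTo_diskMobius_closedBall hfz).comp (hmaps.comp (mapsTo_diskMobius_ball hz))
  have hfd : HasDerivAt f (deriv f z) (diskMobius z 0) := by
    rw [diskMobius_zero]
    exact (hf.differentiableAt (isOpen_ball.mem_nhds (mem_ball_zero_iff.2 hz))).hasDerivAt
  have hgd : HasDerivAt g (-(1 - ‖f z‖ ^ 2 : ℂ)⁻¹ * (deriv f z * (‖z‖ ^ 2 - 1))) 0 :=
    (hasDerivAt_diskMobius_self hfz).comp_of_eq 0 (hfd.comp 0 (hasDerivAt_diskMobius_zero z))
      (by simp)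
  have hschwarz := Complex.norm_deriv_le_one_of_mapsTo_ball hg hgmaps one_pos
  have hfz' : 0 < 1 - ‖f z‖ ^ 2 := by nlinarith [norm_nonneg (f z)]
  have hz' : 0 ≤ 1 - ‖z‖ ^ 2 := by nlinarith [norm_nonneg z]
  have hnorm_f : ‖(1 - ‖f z‖ ^ 2 : ℂ)‖ = 1 - ‖f z‖ ^ 2 := by
    norm_cast; exact Real.norm_of_nonneg hfz'.le
  have hnorm_z : ‖(‖z‖ ^ 2 - 1 : ℂ)‖ = 1 - ‖z‖ ^ 2 := by
    rw [← norm_neg, neg_sub]; norm_cast; exact Real.norm_of_nonneg hz'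
  rw [hgd.deriv, norm_mul, norm_neg, norm_inv, norm_mul, hnorm_f, hnorm_z,
    inv_mul_le_iff₀ hfz', mul_one] at hschwarz
  exact hschwarz

lemma deriv_eq_zero_of_norm_eq_one (hf : DifferentiableOn ℂ f (ball 0 1))
    (hmaps : MapsTo f (ball 0 1) (closedBall 0 1)) (hz : z ∈ ball 0 1) (hfz : ‖f z‖ = 1) :
    deriv f z = 0 := by
  have hmax : IsLocalMax (norm ∘ f) z := by
    filter_upwards [isOpen_ball.mem_nhds hz] with w hw
    simpa [hfz] using hmaps hw
  have hconst : f =ᶠ[𝓝 z] fun _ => f z := Complex.eventually_eq_of_isLocalMax_norm (by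
    filter_upwards [isOpen_ball.mem_nhds hz] with w hw
    exact hf.differentiableAt (isOpen_ball.mem_nhds hw)) hmax
  exact hconst.deriv_eq.trans (deriv_const z (f z))

theorem norm_deriv_mul_le_of_mapsTo_ball (hf : DifferentiableOn ℂ f (ball 0 1))
    (hmaps : MapsTo f (ball 0 1) (closedBall 0 1)) (hz : z ∈ ball 0 1) :
    ‖deriv f z‖ * (1 - ‖z‖ ^ 2) ≤ 1 - ‖f z‖ ^ 2 := by
  rcases (mem_closedBall_zero_iff.1 (hmaps hz)).lt_or_eq with hfz | hfz
  · exact norm_deriv_mul_le_of_norm_lt_one hf hmaps (mem_ball_zero_iff.1 hz) hfz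
  · simp [deriv_eq_zero_of_norm_eq_one hf hmaps hz hfz, hfz]

end SchwarzPick

lemma mul_one_sub_sq_add_two_mul_le {p x : ℝ} (hp0 : 0 ≤ p) (hp : p ^ 2 + p ≤ 1) (hx : x ≤ 1) :
    p * (1 - x ^ 2) + 2 * (1 - p ^ 2) * x ≤ 2 * (1 - p ^ 2) := by
  have hfactor : 0 ≤ 2 * (1 - p ^ 2) - p * (1 + x) := by nlinarith
  nlinarith [mul_nonneg (sub_nonneg.2 hx) hfactor]

theorem stmt_5 (p : ℝ) (hp0 : 0 < p) (hp1 : p < 1)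
    (hp : p ≤ (Real.sqrt 5 - 1) / 2)
    (ω : ℂ → ℂ) (hω : DifferentiableOn ℂ ω (Metric.ball 0 1))
    (hb : ∀ z ∈ Metric.ball (0 : ℂ) 1, ‖ω z‖ ≤ 1) :
    ‖2 * ω p + p * deriv ω p‖ ≤ 2 := by
  have hnorm_p : ‖(p : ℂ)‖ = p := by simp [hp0.le]
  have hpball : (p : ℂ) ∈ ball (0 : ℂ) 1 := by rwa [mem_ball_zero_iff, hnorm_p]
  have hpick := norm_deriv_mul_le_of_mapsTo_ball hω
    (fun z hz => mem_closedBall_zero_iff.2 (hb z hz)) hpball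
  rw [hnorm_p] at hpick
  have hgolden : p ^ 2 + p ≤ 1 := by
    nlinarith [Real.sq_sqrt (show (0 : ℝ) ≤ 5 by norm_num), Real.sqrt_nonneg 5]
  have hp2 : 0 < 1 - p ^ 2 := by nlinarith
  have htri : ‖2 * ω p + p * deriv ω p‖ ≤ 2 * ‖ω p‖ + p * ‖deriv ω p‖ := by
    simpa [abs_of_pos hp0] using norm_add_le (2 * ω p) (p * deriv ω p)
  refine le_of_mul_le_mul_right ?_ hp2
  calc ‖2 * ω p + p * deriv ω p‖ * (1 - p ^ 2)
      ≤ (2 * ‖ω p‖ + p * ‖deriv ω p‖) * (1 - p ^ 2) := by gcongr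
    _ ≤ p * (1 - ‖ω p‖ ^ 2) + 2 * (1 - p ^ 2) * ‖ω p‖ := by
      nlinarith [mul_le_mul_of_nonneg_left hpick hp0.le]
    _ ≤ 2 * (1 - p ^ 2) := mul_one_sub_sq_add_two_mul_le hp0.le hgolden (hb _ hpball)
end

section
/- Let 0 < p < 1 and let c_0, c_1 ∈ ℂ satisfy |c_0| ≤ 1 and |c_1| ≤ (1 - |c_0|^2)/(1 - p^2). Then |p^2(p^2 c_0^2 + 2p c_0) + 2p(1 - p^2)(p^2 c_0 c_1 + p^2 c_0^2 + p c_1 + c_0)| ≤ p(2p + 2x + 2p^2 x - 2p^2 x^3 - p^3 x^2) where x = |c_0|. -/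
/-! Regrouping the expression as `α c₀² + 2p c₀ + β (p c₀ + 1) c₁` with `α = p³ (p + 2(1 - p²))` and
`β = 2p² (1 - p²)`, all coefficients are nonnegative, so the triangle inequality bounds its modulus by
`α x² + 2p x + β (p x + 1) |c₁|`. The hypothesis on `|c₁|` turns `β |c₁|` into at most `2p² (1 - x²)`,
and the claimed bound exceeds the result by exactly `2p² x² (1 - p)² (1 + p) ≥ 0`. -/

lemma norm_quadratic_add_affine_mul_le {𝕜 : Type*} [RCLike 𝕜] {a b c d : ℝ}
    (ha : 0 ≤ a) (hb : 0 ≤ b) (hc : 0 ≤ c) (hd : 0 ≤ d) (z w : 𝕜) :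
    ‖(a : 𝕜) * z ^ 2 + b * z + c * (d * z + 1) * w‖
      ≤ a * ‖z‖ ^ 2 + b * ‖z‖ + c * (d * ‖z‖ + 1) * ‖w‖ := by
  have hdz : ‖(d : 𝕜) * z + 1‖ ≤ d * ‖z‖ + 1 := by
    simpa [RCLike.norm_of_nonneg hd] using norm_add_le ((d : 𝕜) * z) 1
  calc ‖(a : 𝕜) * z ^ 2 + b * z + c * (d * z + 1) * w‖
      ≤ ‖(a : 𝕜) * z ^ 2‖ + ‖(b : 𝕜) * z‖ + ‖(c : 𝕜) * (d * z + 1) * w‖ := norm_add₃_le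
    _ = a * ‖z‖ ^ 2 + b * ‖z‖ + c * ‖(d : 𝕜) * z + 1‖ * ‖w‖ := by
      simp only [norm_mul, norm_pow, RCLike.norm_of_nonneg ha, RCLike.norm_of_nonneg hb,
        RCLike.norm_of_nonneg hc]
    _ ≤ a * ‖z‖ ^ 2 + b * ‖z‖ + c * (d * ‖z‖ + 1) * ‖w‖ := by gcongr

lemma majorant_le_of_le_div {p x y : ℝ} (hp0 : 0 < p) (hp1 : p < 1) (hx : 0 ≤ x)
    (hy : y ≤ (1 - x ^ 2) / (1 - p ^ 2)) :
    p ^ 3 * (p + 2 * (1 - p ^ 2)) * x ^ 2 + 2 * p * x + 2 * p ^ 2 * (1 - p ^ 2) * (p * x + 1) * y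
      ≤ p * (2 * p + 2 * x + 2 * p ^ 2 * x - 2 * p ^ 2 * x ^ 3 - p ^ 3 * x ^ 2) := by
  have hq : 0 < 1 - p ^ 2 := by nlinarith
  have hβy : 2 * p ^ 2 * (1 - p ^ 2) * y ≤ 2 * p ^ 2 * (1 - x ^ 2) := by
    rw [mul_assoc]
    gcongr
    exact (le_div_iff₀' hq).mp hy
  have hgap : p * (2 * p + 2 * x + 2 * p ^ 2 * x - 2 * p ^ 2 * x ^ 3 - p ^ 3 * x ^ 2)
      - (p ^ 3 * (p + 2 * (1 - p ^ 2)) * x ^ 2 + 2 * p * x + 2 * p ^ 2 * (1 - x ^ 2) * (p * x + 1))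
      = 2 * p ^ 2 * x ^ 2 * (1 - p) ^ 2 * (1 + p) := by ring
  have hpx : 0 ≤ p * x + 1 := by positivity
  have hgap_nonneg : 0 ≤ 2 * p ^ 2 * x ^ 2 * (1 - p) ^ 2 * (1 + p) := by positivity
  linarith [mul_le_mul_of_nonneg_right hβy hpx]

theorem stmt_9_general (p : ℝ) (hp0 : 0 < p) (hp1 : p < 1)
    (c₀ c₁ : ℂ)
    (h1 : ‖c₁‖ ≤ (1 - ‖c₀‖ ^ 2) / (1 - p ^ 2)) :
    ‖((p : ℂ) ^ 2 * ((p : ℂ) ^ 2 * c₀ ^ 2 + 2 * p * c₀)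
        + 2 * p * (1 - (p : ℂ) ^ 2) *
          ((p : ℂ) ^ 2 * c₀ * c₁ + (p : ℂ) ^ 2 * c₀ ^ 2 + p * c₁ + c₀))‖
      ≤ p * (2 * p + 2 * ‖c₀‖ + 2 * p ^ 2 * ‖c₀‖
        - 2 * p ^ 2 * ‖c₀‖ ^ 3 - p ^ 3 * ‖c₀‖ ^ 2) := by
  have hq : 0 ≤ 1 - p ^ 2 := by nlinarith
  have hα : 0 ≤ p ^ 3 * (p + 2 * (1 - p ^ 2)) := by positivity
  have hβ : 0 ≤ 2 * p ^ 2 * (1 - p ^ 2) := by positivity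
  calc _ = ‖((p ^ 3 * (p + 2 * (1 - p ^ 2)) : ℝ) : ℂ) * c₀ ^ 2 + ((2 * p : ℝ) : ℂ) * c₀
        + ((2 * p ^ 2 * (1 - p ^ 2) : ℝ) : ℂ) * ((p : ℂ) * c₀ + 1) * c₁‖ := by
        congr 1
        push_cast
        ring
    _ ≤ _ := norm_quadratic_add_affine_mul_le hα (by positivity : (0 : ℝ) ≤ 2 * p) hβ hp0.le
        c₀ c₁
    _ ≤ _ := majorant_le_of_le_div hp0 hp1 (norm_nonneg c₀) h1

theorem stmt_9 (p : ℝ) (hp0 : 0 < p) (hp1 : p < 1)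
    (c₀ c₁ : ℂ) (h0 : ‖c₀‖ ≤ 1)
    (h1 : ‖c₁‖ ≤ (1 - ‖c₀‖ ^ 2) / (1 - p ^ 2)) :
    ‖((p : ℂ) ^ 2 * ((p : ℂ) ^ 2 * c₀ ^ 2 + 2 * p * c₀)
        + 2 * p * (1 - (p : ℂ) ^ 2) *
          ((p : ℂ) ^ 2 * c₀ * c₁ + (p : ℂ) ^ 2 * c₀ ^ 2 + p * c₁ + c₀))‖
      ≤ p * (2 * p + 2 * ‖c₀‖ + 2 * p ^ 2 * ‖c₀‖
        - 2 * p ^ 2 * ‖c₀‖ ^ 3 - p ^ 3 * ‖c₀‖ ^ 2) :=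
  stmt_9_general p hp0 hp1 c₀ c₁ h1
end

section
/- Let 0 < p ≤ (√5 - 1)/2, w_0 ∈ ℂ \ {0}, and c_0, c_1 ∈ ℂ with |c_0| ≤ 1 and |c_1| ≤ (1 - |c_0|^2)/(1 - p^2). Define a_0 = w_0 + (p^2 w_0/(1 - p^2)^2)(1 + p^2 c_0^2 + 2p c_0) + (2p w_0/(1 - p^2))(p^2 c_0 c_1 + p^2 c_0^2 + p c_1 + c_0). Then |a_0 - ((1 - p^2 + p^4)/(1 - p^2)^2) w_0| ≤ (p(2 + 2p - p^3)/(1 - p^2)^2)|w_0|. -/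
/-!
After subtracting `((1 - p² + p⁴) / (1 - p²)²) w₀`, what is left of `a₀` is
`p w₀ M / (1 - p²)²` with `M = 2c₀ + p²(p + 2 - 2p²)c₀² + 2p(1 - p²)(1 + pc₀)c₁`.
The triangle inequality and the bound on `|c₁|` give, with `t = |c₀|`,
`|M| ≤ 2t + p²(p + 2 - 2p²)t² + 2p(1 + pt)(1 - t²)`, and this cubic in `t` stays below
`2 + 2p - p³` on `[0, 1]` as long as `p² + p ≤ 1`, i.e. `p ≤ (√5 - 1)/2`.
-/

lemma sq_add_self_le_one_of_le {p : ℝ} (hp0 : 0 ≤ p) (hp : p ≤ (√5 - 1) / 2) :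
    p ^ 2 + p ≤ 1 := by
  have h5 : √5 ^ 2 = 5 := Real.sq_sqrt (by norm_num)
  nlinarith [Real.sqrt_nonneg 5]

lemma coeff_sub_eq_mul_div {K : Type*} [Field K] (p w₀ c₀ c₁ : K) (hp : 1 - p ^ 2 ≠ 0) :
    w₀ + (p ^ 2 * w₀ / (1 - p ^ 2) ^ 2) * (1 + p ^ 2 * c₀ ^ 2 + 2 * p * c₀)
      + (2 * p * w₀ / (1 - p ^ 2)) * (p ^ 2 * c₀ * c₁ + p ^ 2 * c₀ ^ 2 + p * c₁ + c₀)
      - ((1 - p ^ 2 + p ^ 4) / (1 - p ^ 2) ^ 2) * w₀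
      = p * w₀ * (2 * c₀ + p ^ 2 * (p + 2 - 2 * p ^ 2) * c₀ ^ 2
          + 2 * p * (1 - p ^ 2) * (1 + p * c₀) * c₁) / (1 - p ^ 2) ^ 2 := by
  field_simp
  ring

lemma norm_quadratic_add_le {A B p : ℝ} (hA : 0 ≤ A) (hB : 0 ≤ B) (hp : 0 ≤ p) (c₀ c₁ : ℂ) :
    ‖2 * c₀ + A * c₀ ^ 2 + B * (1 + p * c₀) * c₁‖
      ≤ 2 * ‖c₀‖ + A * ‖c₀‖ ^ 2 + B * (1 + p * ‖c₀‖) * ‖c₁‖ := by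
  have h1 : ‖1 + (p : ℂ) * c₀‖ ≤ 1 + p * ‖c₀‖ := by
    simpa [norm_mul, abs_of_nonneg hp] using norm_add_le (1 : ℂ) (p * c₀)
  calc ‖2 * c₀ + A * c₀ ^ 2 + B * (1 + p * c₀) * c₁‖
      ≤ ‖2 * c₀‖ + ‖(A : ℂ) * c₀ ^ 2‖ + ‖(B : ℂ) * (1 + p * c₀) * c₁‖ := norm_add₃_le
    _ = 2 * ‖c₀‖ + A * ‖c₀‖ ^ 2 + B * ‖1 + (p : ℂ) * c₀‖ * ‖c₁‖ := by
      simp only [norm_mul, norm_pow, Complex.norm_two, Complex.norm_of_nonneg hA,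
        Complex.norm_of_nonneg hB]
    _ ≤ 2 * ‖c₀‖ + A * ‖c₀‖ ^ 2 + B * (1 + p * ‖c₀‖) * ‖c₁‖ := by gcongr

-- In `u = 1 - t` the difference is `2p(1 - p)(1 - p²) + 2(1 - 2p)(1 + p³)u
-- + (2p + 2p² - p³ + 2p⁴)u² + 2p²u²t`; for `p > 1/2` the square `(u - p)²` absorbs the
-- negative linear term.
lemma cubic_le_of_sq_add_self_le_one {p t : ℝ} (hp : 0 ≤ p) (hpp : p ^ 2 + p ≤ 1)
    (ht0 : 0 ≤ t) (ht1 : t ≤ 1) :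
    2 * t + p ^ 2 * (p + 2 - 2 * p ^ 2) * t ^ 2 + 2 * p * (1 + p * t) * (1 - t ^ 2)
      ≤ 2 + 2 * p - p ^ 3 := by
  nlinarith [mul_nonneg (mul_nonneg hp ht0) (sub_nonneg.2 ht1),
    mul_nonneg ht0 (sub_nonneg.2 ht1), mul_nonneg (sub_nonneg.2 hpp) (sq_nonneg (1 - t)),
    sq_nonneg (1 - t - p), mul_nonneg hp (sq_nonneg (1 - t)),
    mul_nonneg (mul_nonneg hp hp) (mul_nonneg ht0 (sq_nonneg (1 - t)))]

theorem stmt_15_general (p : ℝ) (hp0 : 0 < p) (hp : p ≤ (Real.sqrt 5 - 1) / 2)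
    (w₀ : ℂ)
    (c₀ c₁ : ℂ) (h0 : ‖c₀‖ ≤ 1)
    (h1 : ‖c₁‖ ≤ (1 - ‖c₀‖ ^ 2) / (1 - p ^ 2))
    (a₀ : ℂ)
    (ha : a₀ = w₀ + ((p : ℂ) ^ 2 * w₀ / (1 - (p : ℂ) ^ 2) ^ 2) *
        (1 + (p : ℂ) ^ 2 * c₀ ^ 2 + 2 * p * c₀)
      + (2 * p * w₀ / (1 - (p : ℂ) ^ 2)) *
        ((p : ℂ) ^ 2 * c₀ * c₁ + (p : ℂ) ^ 2 * c₀ ^ 2 + p * c₁ + c₀)) :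
    ‖a₀ - ((1 - (p : ℂ) ^ 2 + (p : ℂ) ^ 4) / (1 - (p : ℂ) ^ 2) ^ 2) * w₀‖
      ≤ (p * (2 + 2 * p - p ^ 3) / (1 - p ^ 2) ^ 2) * ‖w₀‖ := by
  have hpp := sq_add_self_le_one_of_le hp0.le hp
  have hq : 0 < 1 - p ^ 2 := by nlinarith
  have hq' : ‖(1 : ℂ) - p ^ 2‖ = 1 - p ^ 2 := by
    rw [← Complex.ofReal_one, ← Complex.ofReal_pow, ← Complex.ofReal_sub,
      Complex.norm_of_nonneg hq.le]
  have hc₁ : 2 * p * (1 - p ^ 2) * ‖c₁‖ ≤ 2 * p * (1 - ‖c₀‖ ^ 2) := by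
    rw [le_div_iff₀ hq] at h1
    nlinarith
  have hA : 0 ≤ p ^ 2 * (p + 2 - 2 * p ^ 2) := mul_nonneg (sq_nonneg p) (by nlinarith)
  have hB : 0 ≤ 2 * p * (1 - p ^ 2) := by positivity
  have hM := norm_quadratic_add_le hA hB hp0.le c₀ c₁
  have hcubic := cubic_le_of_sq_add_self_le_one hp0.le hpp (norm_nonneg c₀) h0
  push_cast at hM
  rw [ha, coeff_sub_eq_mul_div _ _ _ _ (norm_pos_iff.1 (hq' ▸ hq)), norm_div, norm_mul,
    norm_mul, norm_pow, hq', Complex.norm_of_nonneg hp0.le, div_mul_eq_mul_div,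
    mul_right_comm p]
  gcongr p * ?_ * ‖w₀‖ / _
  linarith [mul_le_mul_of_nonneg_left hc₁ (by positivity : 0 ≤ 1 + p * ‖c₀‖)]

theorem stmt_15 (p : ℝ) (hp0 : 0 < p) (hp : p ≤ (Real.sqrt 5 - 1) / 2)
    (w₀ : ℂ) (hw : w₀ ≠ 0)
    (c₀ c₁ : ℂ) (h0 : ‖c₀‖ ≤ 1)
    (h1 : ‖c₁‖ ≤ (1 - ‖c₀‖ ^ 2) / (1 - p ^ 2))
    (a₀ : ℂ)
    (ha : a₀ = w₀ + ((p : ℂ) ^ 2 * w₀ / (1 - (p : ℂ) ^ 2) ^ 2) *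
        (1 + (p : ℂ) ^ 2 * c₀ ^ 2 + 2 * p * c₀)
      + (2 * p * w₀ / (1 - (p : ℂ) ^ 2)) *
        ((p : ℂ) ^ 2 * c₀ * c₁ + (p : ℂ) ^ 2 * c₀ ^ 2 + p * c₁ + c₀)) :
    ‖a₀ - ((1 - (p : ℂ) ^ 2 + (p : ℂ) ^ 4) / (1 - (p : ℂ) ^ 2) ^ 2) * w₀‖
      ≤ (p * (2 + 2 * p - p ^ 3) / (1 - p ^ 2) ^ 2) * ‖w₀‖ :=
  stmt_15_general p hp0 hp w₀ c₀ c₁ h0 h1 a₀ ha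
end

section
/- Let 0 < p ≤ (√5 - 1)/2 and let a_{-1}, a_0, c_0, c_1 ∈ ℂ satisfy |c_0| ≤ 1, |c_1| ≤ (1 - |c_0|^2)/(1 - p^2), and a_{-1} - ((1 - p^2)/p) a_0 = (1 - p^2)/(1 + p^2) - (p^2/(1 + p^2))(2c_0 + p c_1). Then |a_{-1} - ((1 - p^2)/p) a_0| ≤ 1. -/
/-! The relation writes `a₋₁ - ((1 - p²)/p) a₀` as the convex combination
`(1 - p²)/(1 + p²) · 1 + p²/(1 + p²) · (-(2c₀ + p c₁)/2)`, so it suffices that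
`|2c₀ + p c₁| ≤ 2`. With `t = |c₀|`, the Schwarz–Pick bound on `c₁` gives
`2t + p(1 - t²)/(1 - p²) ≤ 2`, which reduces to `p(1 + t) ≤ 2(1 - p²)`; the worst case
`t = 1` is `p² + p ≤ 1`, i.e. `p ≤ (√5 - 1)/2`. -/

lemma sq_add_self_le_one {p : ℝ} (hp0 : 0 ≤ p) (hp : p ≤ (Real.sqrt 5 - 1) / 2) :
    p ^ 2 + p ≤ 1 := by
  have h5 : Real.sqrt 5 ^ 2 = 5 := Real.sq_sqrt (by norm_num)
  nlinarith [Real.sqrt_nonneg 5]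

lemma two_mul_add_mul_le_two {p t s : ℝ} (hp0 : 0 ≤ p) (hpp : p ^ 2 + p ≤ 1)
    (ht1 : t ≤ 1) (hs : (1 - p ^ 2) * s ≤ 1 - t ^ 2) :
    2 * t + p * s ≤ 2 := by
  have hfac : p * (1 - t ^ 2) ≤ 2 * (1 - t) * (1 - p ^ 2) := by
    nlinarith [mul_nonneg (sub_nonneg.mpr ht1) (mul_nonneg hp0 (sub_nonneg.mpr ht1))]
  have hp1 : 0 < 1 - p ^ 2 := by nlinarith
  by_contra! h
  nlinarith [mul_le_mul_of_nonneg_left hs hp0, mul_lt_mul_of_pos_left h hp1]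

lemma norm_two_mul_add_mul_le_two {p : ℝ} (hp0 : 0 ≤ p) (hpp : p ^ 2 + p ≤ 1)
    {c₀ c₁ : ℂ} (h0 : ‖c₀‖ ≤ 1) (h1 : ‖c₁‖ ≤ (1 - ‖c₀‖ ^ 2) / (1 - p ^ 2)) :
    ‖2 * c₀ + p * c₁‖ ≤ 2 := by
  have hp1 : 0 < 1 - p ^ 2 := by nlinarith
  calc ‖2 * c₀ + p * c₁‖ ≤ 2 * ‖c₀‖ + p * ‖c₁‖ := by
        refine (norm_add_le _ _).trans_eq ?_
        rw [norm_mul, norm_mul, Complex.norm_two, Complex.norm_real, Real.norm_of_nonneg hp0]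
    _ ≤ 2 := two_mul_add_mul_le_two hp0 hpp h0
        (by rw [mul_comm]; exact (le_div_iff₀ hp1).mp h1)

lemma norm_ofReal_sub_mul_le {a b : ℝ} (ha : 0 ≤ a) (hb : 0 ≤ b) (x : ℂ) :
    ‖(a : ℂ) - b * x‖ ≤ a + b * ‖x‖ := by
  refine (norm_sub_le _ _).trans_eq ?_
  rw [norm_mul, Complex.norm_real, Complex.norm_real, Real.norm_of_nonneg ha,
    Real.norm_of_nonneg hb]

theorem stmt_16 (p : ℝ) (hp0 : 0 < p) (hp : p ≤ (Real.sqrt 5 - 1) / 2)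
    (am1 a₀ c₀ c₁ : ℂ) (h0 : ‖c₀‖ ≤ 1)
    (h1 : ‖c₁‖ ≤ (1 - ‖c₀‖ ^ 2) / (1 - p ^ 2))
    (hrel : am1 - ((1 - (p : ℂ) ^ 2) / p) * a₀
      = (1 - (p : ℂ) ^ 2) / (1 + (p : ℂ) ^ 2)
        - ((p : ℂ) ^ 2 / (1 + (p : ℂ) ^ 2)) * (2 * c₀ + p * c₁)) :
    ‖am1 - ((1 - (p : ℂ) ^ 2) / p) * a₀‖ ≤ 1 := by
  have hpp := sq_add_self_le_one hp0.le hp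
  have hc := norm_two_mul_add_mul_le_two hp0.le hpp h0 h1
  have hp1 : 0 ≤ 1 - p ^ 2 := by nlinarith
  calc ‖am1 - ((1 - (p : ℂ) ^ 2) / p) * a₀‖
      = ‖(((1 - p ^ 2) / (1 + p ^ 2) : ℝ) : ℂ)
          - ((p ^ 2 / (1 + p ^ 2) : ℝ) : ℂ) * (2 * c₀ + p * c₁)‖ := by
        rw [hrel]; push_cast; rfl
    _ ≤ (1 - p ^ 2) / (1 + p ^ 2) + p ^ 2 / (1 + p ^ 2) * ‖2 * c₀ + p * c₁‖ :=
        norm_ofReal_sub_mul_le (by positivity) (by positivity) _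
    _ ≤ (1 - p ^ 2) / (1 + p ^ 2) + p ^ 2 / (1 + p ^ 2) * 2 := by gcongr
    _ = 1 := by field_simp; ring
end

section
/- Let 0 < p < 1 and let f_θ(z) = (z - (p/(1 + p^2))(1 + e^{iθ})z^2)/((1 - z/p)(1 - zp)) for θ ∈ [0, 2π). Then the residue a_{-1} of f_θ at its simple pole z = p satisfies |a_{-1} + p^2/(1 - p^4)| = p^4/(1 - p^4). -/
open Filter Topology

/-
Writing `1 - z / p = (p - z) / p`, the factor `z - p` cancels the pole at `p` against `-p`, so
the residue is `-p * (p - c p²) / (1 - p²)` with `c = p (1 + e^{iθ}) / (1 + p²)`. Adding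
`p² / (1 - p⁴)` leaves exactly `p⁴ e^{iθ} / (1 - p⁴)`, whose modulus is `p⁴ / (1 - p⁴)`.
-/

lemma sub_mul_div_one_sub_div {K : Type*} [Field K] {p z : K} (hp : p ≠ 0) (hz : z ≠ p)
    (w : K) : (z - p) * (w / (1 - z / p)) = -p * w := by
  have hpz : p - z ≠ 0 := sub_ne_zero.mpr hz.symm
  rw [one_sub_div hp]
  field_simp
  ring

lemma tendsto_sub_mul_div_one_sub_div {𝕜 : Type*} [NormedField 𝕜] {g : 𝕜 → 𝕜} {p : 𝕜}
    (hp : p ≠ 0) (hg : ContinuousAt g p) :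
    Tendsto (fun z => (z - p) * (g z / (1 - z / p))) (𝓝[≠] p) (𝓝 (-p * g p)) := by
  have hlim : Tendsto (fun z => -p * g z) (𝓝[≠] p) (𝓝 (-p * g p)) :=
    ((continuousAt_const.mul hg).tendsto).mono_left nhdsWithin_le_nhds
  refine hlim.congr' ?_
  filter_upwards [self_mem_nhdsWithin] with z hz
  exact (sub_mul_div_one_sub_div hp hz (g z)).symm

lemma neg_mul_div_add_sq_div_one_sub_pow_four {K : Type*} [Field K] {p : K}
    (hp : 1 - p ^ 4 ≠ 0) (u : K) :
    -p * ((p - p / (1 + p ^ 2) * (1 + u) * p ^ 2) / (1 - p * p)) + p ^ 2 / (1 - p ^ 4)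
      = p ^ 4 * u / (1 - p ^ 4) := by
  have hfac : 1 - p ^ 4 = (1 - p * p) * (1 + p ^ 2) := by ring
  obtain ⟨h₁, h₂⟩ := mul_ne_zero_iff.mp (hfac ▸ hp)
  rw [hfac]
  field_simp
  ring

theorem stmt_18_general (p : ℝ) (hp0 : 0 < p) (hp1 : p < 1) (θ : ℝ)
    (f : ℂ → ℂ)
    (hf : ∀ z : ℂ, f z = (z - ((p : ℂ) / (1 + (p : ℂ) ^ 2)) *
        (1 + Complex.exp (θ * Complex.I)) * z ^ 2) /
      ((1 - z / p) * (1 - z * p)))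
    (a : ℂ)
    (ha : Filter.Tendsto (fun z : ℂ => (z - p) * f z)
      (nhdsWithin (p : ℂ) {(p : ℂ)}ᶜ) (nhds a)) :
    ‖a + (p : ℂ) ^ 2 / (1 - (p : ℂ) ^ 4)‖ = p ^ 4 / (1 - p ^ 4) := by
  set c : ℂ := (p : ℂ) / (1 + (p : ℂ) ^ 2) * (1 + Complex.exp (θ * Complex.I))
  set g : ℂ → ℂ := fun z => (z - c * z ^ 2) / (1 - z * p)
  have hp4 : 0 < 1 - p ^ 4 := by nlinarith [pow_lt_one₀ hp0.le hp1 (by norm_num : 4 ≠ 0)]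
  have hp4ℂ : (1 : ℂ) - (p : ℂ) ^ 4 ≠ 0 := by exact_mod_cast hp4.ne'
  have hpp : (1 : ℂ) - p * p ≠ 0 := by exact_mod_cast (by nlinarith : (1 : ℝ) - p * p ≠ 0)
  have hg : ContinuousAt g p := by fun_prop (disch := exact hpp)
  have hf' : (fun z : ℂ => (z - p) * f z) = fun z => (z - p) * (g z / (1 - z / p)) := by
    ext z
    rw [hf, mul_comm (1 - z / p), ← div_div]
  have ha' : a = -p * g p := tendsto_nhds_unique ha
    (hf' ▸ tendsto_sub_mul_div_one_sub_div (by exact_mod_cast hp0.ne') hg)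
  have hval : a + (p : ℂ) ^ 2 / (1 - (p : ℂ) ^ 4)
      = ((p ^ 4 / (1 - p ^ 4) : ℝ) : ℂ) * Complex.exp (θ * Complex.I) := by
    rw [ha', neg_mul_div_add_sq_div_one_sub_pow_four hp4ℂ]
    push_cast
    ring
  rw [hval, norm_mul, Complex.norm_exp_ofReal_mul_I, mul_one, Complex.norm_real,
    Real.norm_of_nonneg (by positivity)]

theorem stmt_18 (p : ℝ) (hp0 : 0 < p) (hp1 : p < 1) (θ : ℝ)
    (hθ : θ ∈ Set.Ico 0 (2 * Real.pi))
    (f : ℂ → ℂ)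
    (hf : ∀ z : ℂ, f z = (z - ((p : ℂ) / (1 + (p : ℂ) ^ 2)) *
        (1 + Complex.exp (θ * Complex.I)) * z ^ 2) /
      ((1 - z / p) * (1 - z * p)))
    (a : ℂ)
    (ha : Filter.Tendsto (fun z : ℂ => (z - p) * f z)
      (nhdsWithin (p : ℂ) {(p : ℂ)}ᶜ) (nhds a)) :
    ‖a + (p : ℂ) ^ 2 / (1 - (p : ℂ) ^ 4)‖ = p ^ 4 / (1 - p ^ 4) :=
  stmt_18_general p hp0 hp1 θ f hf a ha
end
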